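/- arXiv:2407.07508 — 2 statements merged into one kernel-verified Lean document; each statement's English description precedes it below -/
import Mathlib

section
/- Assume additionally that α_n ≠ 0 for all n ≥ 0. Then for all nonnegative integers n, r, and s, the generalized moment μ_{n,r,s} equals the weight sum Σ_{p ∈ Sch_{n,r,s}} wt_S(p) over all Schröder paths from (0,r) to (n,s) that do not start with a vertical down-step. -/
open Polynomial LaurentPolynomial Finset

noncomputable section

/-- Extension of the Verblunsky coefficients to integer indices, with the
convention `α₋₁ = -1` (and junk value `-1` for all negative indices). -/
def az (α : ℕ → ℂ) (k : ℤ) : ℂ := if 0 ≤ k then α k.toNat else -1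

/-- The monic OPUC `Φ_n` defined by Szegő's recurrence
`Φ_{n+1}(z) = z·Φ_n(z) - conj(α_n)·Φ_n^*(z)`, where `Φ_n^*` is the reverse
polynomial `reflect n (map conj Φ_n)`. -/
def szego (α : ℕ → ℂ) : ℕ → Polynomial ℂ
  | 0 => 1
  | n + 1 =>
      Polynomial.X * szego α n -
        Polynomial.C ((starRingEnd ℂ) (α n)) *
          Polynomial.reflect n ((szego α n).map (starRingEnd ℂ))

/-- `f̄(1/z)` as a Laurent polynomial, for a polynomial `f`. -/
def polyBarInv (f : Polynomial ℂ) : LaurentPolynomial ℂ :=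
  f.sum fun k c => LaurentPolynomial.C ((starRingEnd ℂ) c) * LaurentPolynomial.T (-(k : ℤ))

/-- `f̄(1/z)` as a Laurent polynomial, for a Laurent polynomial `f`. -/
def laurentBarInv (f : LaurentPolynomial ℂ) : LaurentPolynomial ℂ :=
  Finsupp.sum (AddMonoidAlgebra.coeff f) fun k c => LaurentPolynomial.C ((starRingEnd ℂ) c) * LaurentPolynomial.T (-k)

/-- The generalized moment `μ_{n,r,s} = ⟨Φ_s(z), z^n·Φ_r(z)⟩ / ⟨Φ_s(z), Φ_s(z)⟩`,
where `⟨f,g⟩ = L(f(z)·ḡ(1/z))` and `⟨Φ_s, Φ_s⟩ = ∏_{j<s} (1 - |α_j|²)`. -/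
def genMom (L : LaurentPolynomial ℂ →ₗ[ℂ] ℂ) (α : ℕ → ℂ) (n : ℤ) (r s : ℕ) : ℂ :=
  L (Polynomial.toLaurent (szego α s) *
      laurentBarInv (LaurentPolynomial.T n * Polynomial.toLaurent (szego α r))) /
    ∏ j ∈ Finset.range s, ((1 - Complex.normSq (α j) : ℝ) : ℂ)

/-- `IsLatticePath S p l q` : the list of steps `l`, starting at `p`, forms a lattice
path from `p` to `q` lying weakly above the x-axis, each step `st` taken from a
position `x` satisfying the (possibly position-dependent) step condition `S x st`. -/
def IsLatticePath (S : ℤ × ℤ → ℤ × ℤ → Prop) : ℤ × ℤ → List (ℤ × ℤ) → ℤ × ℤ → Prop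
  | p, [], q => p = q ∧ 0 ≤ p.2
  | p, st :: rest, q => 0 ≤ p.2 ∧ S p st ∧ IsLatticePath S (p + st) rest q

/-- The weight of a path: the product of the weights of its steps, where the weight
of a step may depend on its starting position. -/
def pathWeight (w : ℤ × ℤ → ℤ × ℤ → ℂ) : ℤ × ℤ → List (ℤ × ℤ) → ℂ
  | _, [] => 1
  | p, st :: rest => w p st * pathWeight w (p + st) rest

/-- Łukasiewicz steps: `(1, k)` with `k ≤ 1`. -/
def lukaStep (_p st : ℤ × ℤ) : Prop := st.1 = 1 ∧ st.2 ≤ 1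

/-- Łukasiewicz step weights: an up-step has weight `1`, and a step
`(a,b) → (a+1,b-k)` (`0 ≤ k ≤ b`) has weight
`-α_b·conj(α_{b-k-1})·∏_{j=b-k}^{b-1} (1-|α_j|²)`. -/
def wtLstep (α : ℕ → ℂ) (p st : ℤ × ℤ) : ℂ :=
  if st.2 = 1 then 1
  else
    -(az α p.2) * (starRingEnd ℂ) (az α (p.2 + st.2 - 1)) *
      ∏ j ∈ Finset.Ico (p.2 + st.2) p.2, ((1 - Complex.normSq (az α j) : ℝ) : ℂ)

/-- Gentle Motzkin steps: `(1,1)` (only at even `a+b`), `(1,0)`, `(1,-1)` (only at odd `a+b`). -/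
def gentleStep (p st : ℤ × ℤ) : Prop :=
  (st = (1, 1) ∧ Even (p.1 + p.2)) ∨ st = (1, 0) ∨ (st = (1, -1) ∧ Odd (p.1 + p.2))

/-- Gentle Motzkin step weights. -/
def wtMstep (α : ℕ → ℂ) (p st : ℤ × ℤ) : ℂ :=
  if st = (1, 1) then 1
  else if st = (1, -1) then ((1 - Complex.normSq (az α (p.2 - 1)) : ℝ) : ℂ)
  else if Even (p.1 + p.2) then az α p.2
  else -(starRingEnd ℂ) (az α (p.2 - 1))

/-- Schröder steps: `(1,1)`, `(1,0)`, `(0,-1)`. -/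
def schStep (_p st : ℤ × ℤ) : Prop := st = (1, 1) ∨ st = (1, 0) ∨ st = (0, -1)

/-- Schröder step weights. -/
def wtSstep (α : ℕ → ℂ) (p st : ℤ × ℤ) : ℂ :=
  if st = (1, 1) then 1
  else if st = (1, 0) then -((starRingEnd ℂ) (az α (p.2 - 1)) / (starRingEnd ℂ) (az α p.2))
  else
    ((starRingEnd ℂ) (az α (p.2 - 2)) / (starRingEnd ℂ) (az α (p.2 - 1))) *
      ((1 - Complex.normSq (az α (p.2 - 1)) : ℝ) : ℂ)

/-!
Splitting a Schröder path at its first step shows that the weight sums `S_{n,r}` over paths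
from `(0,r)` to `(n,s)` not starting with a down step, and `A_{n,r}` over all such paths, satisfy
`S_{0,r} = δ_{rs}`, `S_{n+1,r} = A_{n,r+1} + h_r A_{n,r}` and `A_{n,r} = S_{n,r} + d_r A_{n,r-1}`,
where `h_b` and `d_b` are the weights of a horizontal and of a down step at height `b`.

Put `Q_r = Φ̄_r(1/z)` and `χ_r = z^{-r} Φ_r / (-ᾱ_{r-1})`. Read in the ring of Laurent
polynomials, Szegő's recurrence becomes `z⁻¹ Q_r = χ_{r+1} + h_r χ_r` and
`χ_{r+1} = Q_{r+1} + d_{r+1} χ_r`. Applying the functional `f ↦ L(Φ_s f) / ⟨Φ_s, Φ_s⟩` to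
`z^{-n} Q_r` (which gives `μ_{n,r,s}`) and to `z^{-n} χ_r` therefore produces two families with
the same recursions as `S` and `A`, and orthogonality of the `Φ_s` gives the same initial
values `δ_{rs}`.
-/

lemma Polynomial.toLaurent_map {R S : Type*} [Semiring R] [Semiring S] (φ : R →+* S) (p : R[X]) :
    toLaurent (p.map φ) = AddMonoidAlgebra.mapRingHom ℤ φ (toLaurent p) := by
  induction p using Polynomial.induction_on' with
  | add p q hp hq => simp [Polynomial.map_add, hp, hq]
  | monomial k c =>
    rw [Polynomial.map_monomial, ← C_mul_X_pow_eq_monomial, ← C_mul_X_pow_eq_monomial,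
      toLaurent_C_mul_X_pow, toLaurent_C_mul_X_pow, ← single_eq_C_mul_T, ← single_eq_C_mul_T,
      AddMonoidAlgebra.mapRingHom_single]

lemma Polynomial.toLaurent_reflect {R : Type*} [CommSemiring R] {p : R[X]} {N : ℕ}
    (h : p.natDegree ≤ N) : toLaurent (p.reflect N) = T N * invert (toLaurent p) := by
  obtain ⟨k, rfl⟩ := Nat.exists_eq_add_of_le' h
  have hmul := reflect_mul 1 p (F := k) (G := p.natDegree) (by simp) le_rfl
  rw [one_mul] at hmul
  rw [hmul, reflect_one, ← reverse, map_mul, toLaurent_reverse, toLaurent_X_pow, Nat.cast_add,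
    T_add]
  ring

lemma Polynomial.natDegree_reflect_le_of_le {R : Type*} [Semiring R] {p : R[X]} {N : ℕ}
    (h : p.natDegree ≤ N) : (p.reflect N).natDegree ≤ N :=
  natDegree_reflect_le.trans (max_le le_rfl h)

lemma LinearMap.map_toLaurent_of_natDegree_le {R : Type*} [CommSemiring R]
    (Λ : LaurentPolynomial R →ₗ[R] R) {f : R[X]} {N : ℕ} (hf : f.natDegree ≤ N)
    (hΛ : ∀ j < N, Λ (T j) = 0) : Λ (toLaurent f) = f.coeff N * Λ (T N) := by
  have hmon (j : ℕ) : Λ (toLaurent (monomial j (f.coeff j))) = f.coeff j * Λ (T j) := by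
    rw [← C_mul_X_pow_eq_monomial, toLaurent_C_mul_X_pow, ← LaurentPolynomial.smul_eq_C_mul,
      map_smul, smul_eq_mul]
  conv_lhs => rw [as_sum_range' f (N + 1) (Nat.lt_succ_of_le hf)]
  rw [map_sum, map_sum, Finset.sum_range_succ, hmon,
    Finset.sum_eq_zero fun j hj => by rw [hmon, hΛ j (Finset.mem_range.1 hj), mul_zero], zero_add]

def barInv : LaurentPolynomial ℂ →+* LaurentPolynomial ℂ :=
  invert.toRingHom.comp (AddMonoidAlgebra.mapRingHom ℤ (starRingEnd ℂ))

lemma barInv_C_mul_T (c : ℂ) (n : ℤ) :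
    barInv (LaurentPolynomial.C c * T n) = LaurentPolynomial.C (starRingEnd ℂ c) * T (-n) := by
  rw [← single_eq_C_mul_T, ← single_eq_C_mul_T]
  exact (congrArg invert (AddMonoidAlgebra.mapRingHom_single _ _ _)).trans
    (AddMonoidAlgebra.domCongr_single ..)

@[simp]
lemma barInv_C (c : ℂ) :
    barInv (LaurentPolynomial.C c) = LaurentPolynomial.C (starRingEnd ℂ c) := by
  simpa using barInv_C_mul_T c 0

@[simp]
lemma barInv_T (n : ℤ) : barInv (T n) = T (-n) := by
  simpa using barInv_C_mul_T 1 n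

lemma barInv_barInv (f : LaurentPolynomial ℂ) : barInv (barInv f) = f := by
  induction f using LaurentPolynomial.induction_on' with
  | add p q hp hq => rw [map_add, map_add, hp, hq]
  | C_mul_T n c => simp

lemma laurentBarInv_eq_barInv (f : LaurentPolynomial ℂ) : laurentBarInv f = barInv f := by
  induction f using LaurentPolynomial.induction_on' with
  | add p q hp hq =>
    rw [map_add, ← hp, ← hq]
    exact Finsupp.sum_add_index (by simp) (by simp [add_mul])
  | C_mul_T n c =>
    rw [barInv_C_mul_T, laurentBarInv, ← single_eq_C_mul_T, AddMonoidAlgebra.coeff_single,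
      Finsupp.sum_single_index (by simp)]

lemma polyBarInv_eq_barInv (f : ℂ[X]) : polyBarInv f = barInv (toLaurent f) := by
  induction f using Polynomial.induction_on' with
  | add p q hp hq =>
    rw [map_add, map_add, ← hp, ← hq]
    exact Polynomial.sum_add_index _ _ _ (by simp) (by simp [add_mul])
  | monomial k c =>
    rw [polyBarInv, Polynomial.sum_monomial_index _ _ (by simp), ← C_mul_X_pow_eq_monomial,
      toLaurent_C_mul_X_pow, barInv_C_mul_T]

lemma barInv_toLaurent (f : ℂ[X]) :
    barInv (toLaurent f) = invert (toLaurent (f.map (starRingEnd ℂ))) := by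
  rw [Polynomial.toLaurent_map]
  rfl

section Szego

variable (α : ℕ → ℂ) (L : LaurentPolynomial ℂ →ₗ[ℂ] ℂ)

lemma natDegree_szego_le (n : ℕ) : (szego α n).natDegree ≤ n := by
  induction n with
  | zero => simp [szego]
  | succ n ih =>
    have := natDegree_reflect_le_of_le ((natDegree_map_le (f := starRingEnd ℂ)).trans ih)
    refine (natDegree_sub_le _ _).trans (max_le ?_ ?_)
    · exact natDegree_mul_le.trans (by simp; omega)
    · exact natDegree_mul_le.trans (by simpa using this.trans n.le_succ)

lemma coeff_szego_self (n : ℕ) : (szego α n).coeff n = 1 := by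
  induction n with
  | zero => simp [szego]
  | succ n ih =>
    have := natDegree_reflect_le_of_le
      ((natDegree_map_le (f := starRingEnd ℂ)).trans (natDegree_szego_le α n))
    rw [szego, coeff_sub, coeff_X_mul, ih, coeff_C_mul,
      coeff_eq_zero_of_natDegree_lt (this.trans_lt n.lt_succ_self), mul_zero, sub_zero]

def szegoL (n : ℕ) : LaurentPolynomial ℂ := toLaurent (szego α n)

def szegoNormSq (n : ℕ) : ℂ :=
  ∏ j ∈ Finset.range n, ((1 - Complex.normSq (α j) : ℝ) : ℂ)

lemma szegoL_succ (n : ℕ) :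
    szegoL α (n + 1) =
      T 1 * szegoL α n - starRingEnd ℂ (α n) • (T n * barInv (szegoL α n)) := by
  rw [szegoL, szego, map_sub, map_mul, map_mul, toLaurent_X, toLaurent_C,
    Polynomial.toLaurent_reflect (natDegree_map_le.trans (natDegree_szego_le α n)),
    ← barInv_toLaurent, LaurentPolynomial.smul_eq_C_mul]
  rfl

lemma barInv_szegoL_succ (n : ℕ) :
    barInv (szegoL α (n + 1)) =
      T (-1) * barInv (szegoL α n) - α n • (T (-n) * szegoL α n) := by
  simp [szegoL_succ, LaurentPolynomial.smul_eq_C_mul, barInv_barInv]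

lemma T_neg_mul_szegoL_succ (n : ℕ) :
    T (-(n + 1 : ℕ)) * szegoL α (n + 1) =
      T (-n) * szegoL α n - starRingEnd ℂ (α n) • (T (-1) * barInv (szegoL α n)) := by
  rw [szegoL_succ, mul_sub, mul_smul_comm, ← mul_assoc, ← mul_assoc, ← T_add, ← T_add]
  push_cast
  ring_nf

lemma T_neg_mul_szegoL_succ' (n : ℕ) :
    T (-(n + 1 : ℕ)) * szegoL α (n + 1) =
      ((1 - Complex.normSq (α n) : ℝ) : ℂ) • (T (-n) * szegoL α n) -
        starRingEnd ℂ (α n) • barInv (szegoL α (n + 1)) := by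
  rw [T_neg_mul_szegoL_succ, barInv_szegoL_succ, smul_sub, smul_smul,
    ← Complex.normSq_eq_conj_mul_self]
  push_cast
  module

lemma szego_orthogonal (hLphi : ∀ k : ℕ, 1 ≤ k → L (toLaurent (szego α k)) = 0)
    (hLbar : ∀ k : ℕ, 1 ≤ k → L (polyBarInv (szego α k)) = 0) (n : ℕ) {j : ℤ}
    (hj0 : 0 ≤ j) (hjn : j < n) :
    L (T (-j) * szegoL α n) = 0 ∧ L (T j * barInv (szegoL α n)) = 0 := by
  induction n generalizing j with
  | zero => omega
  | succ n ih =>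
    rcases hj0.eq_or_lt with rfl | hj
    · simpa [szegoL, ← polyBarInv_eq_barInv] using ⟨hLphi _ n.succ_pos, hLbar _ n.succ_pos⟩
    have hP : T (-j) * szegoL α (n + 1) = T (-(j - 1)) * szegoL α n -
        starRingEnd ℂ (α n) • (T (n - j) * barInv (szegoL α n)) := by
      rw [szegoL_succ, mul_sub, mul_smul_comm, ← mul_assoc, ← mul_assoc, ← T_add, ← T_add]
      ring_nf
    have hQ : T j * barInv (szegoL α (n + 1)) = T (j - 1) * barInv (szegoL α n) -
        α n • (T (-(n - j)) * szegoL α n) := by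
      rw [barInv_szegoL_succ, mul_sub, mul_smul_comm, ← mul_assoc, ← mul_assoc, ← T_add,
        ← T_add]
      ring_nf
    rw [hP, hQ, map_sub, map_sub, map_smul, map_smul, (ih (j := j - 1) (by omega) (by omega)).1,
      (ih (by omega) (by omega)).2, (ih (j := j - 1) (by omega) (by omega)).2,
      (ih (j := n - j) (by omega) (by omega)).1]
    simp

lemma L_T_neg_mul_szegoL_self (hL1 : L 1 = 1)
    (hLbar : ∀ k : ℕ, 1 ≤ k → L (polyBarInv (szego α k)) = 0) (n : ℕ) :
    L (T (-n) * szegoL α n) = szegoNormSq α n := by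
  induction n with
  | zero => simpa [szegoL, szego, szegoNormSq] using hL1
  | succ n ih =>
    rw [T_neg_mul_szegoL_succ', map_sub, map_smul, map_smul, ih, szegoL, ← polyBarInv_eq_barInv,
      hLbar _ n.succ_pos, szegoNormSq, szegoNormSq, Finset.prod_range_succ, smul_eq_mul, smul_zero,
      sub_zero, mul_comm]

lemma L_szegoL_mul_barInv_toLaurent (hL1 : L 1 = 1)
    (hLphi : ∀ k : ℕ, 1 ≤ k → L (toLaurent (szego α k)) = 0)
    (hLbar : ∀ k : ℕ, 1 ≤ k → L (polyBarInv (szego α k)) = 0) {f : ℂ[X]} {s : ℕ}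
    (hf : f.natDegree ≤ s) :
    L (szegoL α s * barInv (toLaurent f)) = starRingEnd ℂ (f.coeff s) * szegoNormSq α s := by
  have h := ((L ∘ₗ LinearMap.mulLeft ℂ (szegoL α s)) ∘ₗ invert.toLinearMap)
      |>.map_toLaurent_of_natDegree_le (f := f.map (starRingEnd ℂ)) (natDegree_map_le.trans hf)
      fun j hj => by
    simpa [mul_comm] using (szego_orthogonal α L hLphi hLbar s (j := j) (by omega) (by omega)).1
  simp only [LinearMap.comp_apply, AlgEquiv.toLinearMap_apply, LinearMap.mulLeft_apply, invert_T,
    coeff_map] at h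
  rw [barInv_toLaurent, h, mul_comm (szegoL α s), L_T_neg_mul_szegoL_self α L hL1 hLbar]

lemma L_toLaurent_mul_barInv_szegoL
    (hLphi : ∀ k : ℕ, 1 ≤ k → L (toLaurent (szego α k)) = 0)
    (hLbar : ∀ k : ℕ, 1 ≤ k → L (polyBarInv (szego α k)) = 0) {f : ℂ[X]} {r : ℕ}
    (hf : f.natDegree < r) : L (toLaurent f * barInv (szegoL α r)) = 0 := by
  have h := (L ∘ₗ LinearMap.mulRight ℂ (barInv (szegoL α r))).map_toLaurent_of_natDegree_le
    hf.le fun j hj => (szego_orthogonal α L hLphi hLbar r (j := j) (by omega) (by omega)).2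
  simpa [coeff_eq_zero_of_natDegree_lt hf] using h

lemma L_szegoL_mul_barInv_szegoL (hL1 : L 1 = 1)
    (hLphi : ∀ k : ℕ, 1 ≤ k → L (toLaurent (szego α k)) = 0)
    (hLbar : ∀ k : ℕ, 1 ≤ k → L (polyBarInv (szego α k)) = 0) (r s : ℕ) :
    L (szegoL α s * barInv (szegoL α r)) = if r = s then szegoNormSq α s else 0 := by
  rcases lt_trichotomy r s with hrs | rfl | hsr
  · refine (L_szegoL_mul_barInv_toLaurent α L hL1 hLphi hLbar
      ((natDegree_szego_le α r).trans hrs.le)).trans ?_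
    simp [coeff_eq_zero_of_natDegree_lt ((natDegree_szego_le α r).trans_lt hrs), hrs.ne]
  · refine (L_szegoL_mul_barInv_toLaurent α L hL1 hLphi hLbar (natDegree_szego_le α r)).trans ?_
    simp [coeff_szego_self]
  · rw [if_neg hsr.ne']
    exact L_toLaurent_mul_barInv_szegoL α L hLphi hLbar ((natDegree_szego_le α s).trans_lt hsr)

lemma szegoNormSq_ne_zero (hα : ∀ k, ‖α k‖ < 1) (s : ℕ) : szegoNormSq α s ≠ 0 := by
  refine Finset.prod_ne_zero_iff.2 fun j _ => ?_
  have : Complex.normSq (α j) < 1 := by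
    rw [Complex.normSq_eq_norm_sq]
    nlinarith [hα j, norm_nonneg (α j)]
  exact_mod_cast (sub_pos.2 this).ne'

def momentFunctional (s : ℕ) : LaurentPolynomial ℂ →ₗ[ℂ] ℂ :=
  (szegoNormSq α s)⁻¹ • (L ∘ₗ LinearMap.mulLeft ℂ (szegoL α s))

lemma genMom_eq_momentFunctional (n : ℤ) (r s : ℕ) :
    genMom L α n r s = momentFunctional α L s (T (-n) * barInv (szegoL α r)) := by
  rw [genMom, laurentBarInv_eq_barInv, map_mul barInv, barInv_T, div_eq_inv_mul]
  rfl

lemma momentFunctional_barInv_szegoL (hα : ∀ k, ‖α k‖ < 1) (hL1 : L 1 = 1)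
    (hLphi : ∀ k : ℕ, 1 ≤ k → L (toLaurent (szego α k)) = 0)
    (hLbar : ∀ k : ℕ, 1 ≤ k → L (polyBarInv (szego α k)) = 0) (r s : ℕ) :
    momentFunctional α L s (barInv (szegoL α r)) = if r = s then 1 else 0 := by
  rw [momentFunctional, LinearMap.smul_apply, LinearMap.comp_apply, LinearMap.mulLeft_apply,
    L_szegoL_mul_barInv_szegoL α L hL1 hLphi hLbar, smul_eq_mul]
  split_ifs
  · exact inv_mul_cancel₀ (szegoNormSq_ne_zero α hα s)
  · exact mul_zero _

end Szego

section Chi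

variable (α : ℕ → ℂ)

lemma az_natCast (r : ℕ) : az α r = α r := by simp [az]

lemma az_ne_zero (hα0 : ∀ k, α k ≠ 0) (k : ℤ) : az α k ≠ 0 := by
  unfold az
  split_ifs
  exacts [hα0 _, by norm_num]

lemma wtSstep_horiz (p : ℤ × ℤ) :
    wtSstep α p (1, 0) = -(starRingEnd ℂ (az α (p.2 - 1)) / starRingEnd ℂ (az α p.2)) := by
  simp [wtSstep]

lemma wtSstep_down (p : ℤ × ℤ) :
    wtSstep α p (0, -1) = starRingEnd ℂ (az α (p.2 - 2)) / starRingEnd ℂ (az α (p.2 - 1)) *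
      ((1 - Complex.normSq (az α (p.2 - 1)) : ℝ) : ℂ) := by
  simp [wtSstep]

def szegoChi (r : ℕ) : LaurentPolynomial ℂ :=
  (-starRingEnd ℂ (az α (r - 1)))⁻¹ • (T (-r) * szegoL α r)

lemma szegoChi_zero : szegoChi α 0 = 1 := by
  simp [szegoChi, az, szegoL, szego]

lemma T_neg_one_mul_barInv_szegoL (hα0 : ∀ k, α k ≠ 0) (r : ℕ) :
    T (-1) * barInv (szegoL α r) =
      szegoChi α (r + 1) + wtSstep α (0, r) (1, 0) • szegoChi α r := by
  have hr : starRingEnd ℂ (α r) ≠ 0 := by simpa using hα0 r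
  have hr' : starRingEnd ℂ (az α (r - 1)) ≠ 0 := by simpa using az_ne_zero α hα0 (r - 1)
  rw [szegoChi, szegoChi, T_neg_mul_szegoL_succ, wtSstep_horiz]
  simp only [Nat.cast_add, Nat.cast_one, add_sub_cancel_right, az_natCast]
  match_scalars <;> field_simp
  ring

lemma szegoChi_succ (hα0 : ∀ k, α k ≠ 0) (r : ℕ) :
    szegoChi α (r + 1) =
      barInv (szegoL α (r + 1)) + wtSstep α (0, (r + 1 : ℕ)) (0, -1) • szegoChi α r := by
  have hr : starRingEnd ℂ (α r) ≠ 0 := by simpa using hα0 r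
  have hr' : starRingEnd ℂ (az α (r - 1)) ≠ 0 := by simpa using az_ne_zero α hα0 (r - 1)
  rw [szegoChi, szegoChi, T_neg_mul_szegoL_succ', wtSstep_down]
  simp only [Nat.cast_add, Nat.cast_one, add_sub_cancel_right, az_natCast,
    show (r : ℤ) + 1 - 2 = r - 1 by ring]
  match_scalars <;> field_simp

end Chi

section LatticePaths

variable {S : ℤ × ℤ → ℤ × ℤ → Prop} {w : ℤ × ℤ → ℤ × ℤ → ℂ}

lemma IsLatticePath.snd_nonneg {p q : ℤ × ℤ} {l : List (ℤ × ℤ)}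
    (h : IsLatticePath S p l q) : 0 ≤ p.2 := by
  cases l with
  | nil => exact h.2
  | cons => exact h.1

lemma isLatticePath_add_fst_iff {t : ℤ} (hS : ∀ p st, S (p + (t, 0)) st ↔ S p st)
    {l : List (ℤ × ℤ)} {p q : ℤ × ℤ} :
    IsLatticePath S (p + (t, 0)) l (q + (t, 0)) ↔ IsLatticePath S p l q := by
  induction l generalizing p with
  | nil => simp [IsLatticePath]
  | cons st rest ih => simp only [IsLatticePath, hS, add_right_comm p, ih, Prod.snd_add, add_zero]

lemma pathWeight_add_fst {t : ℤ} (hw : ∀ p st, w (p + (t, 0)) st = w p st)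
    (l : List (ℤ × ℤ)) (p : ℤ × ℤ) : pathWeight w (p + (t, 0)) l = pathWeight w p l := by
  induction l generalizing p with
  | nil => rfl
  | cons st rest ih => simp only [pathWeight, hw, add_right_comm p, ih]

lemma finsum_mem_image_cons_pathWeight (p st : ℤ × ℤ) (A : Set (List (ℤ × ℤ))) :
    ∑ᶠ l ∈ List.cons st '' A, pathWeight w p l =
      w p st * ∑ᶠ l ∈ A, pathWeight w (p + st) l := by
  rw [finsum_mem_image List.cons_injective.injOn, mul_finsum_mem]
  rfl

end LatticePaths

section SchroederPaths

def allSchPaths (n : ℕ) (r s : ℤ) : Set (List (ℤ × ℤ)) :=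
  {l | IsLatticePath schStep (0, r) l (n, s)}

def schPaths (n : ℕ) (r s : ℤ) : Set (List (ℤ × ℤ)) :=
  {l | IsLatticePath schStep (0, r) l (n, s) ∧ l.head? ≠ some (0, -1)}

lemma IsLatticePath.fst_le_of_schStep {p q : ℤ × ℤ} {l : List (ℤ × ℤ)}
    (h : IsLatticePath schStep p l q) : p.1 ≤ q.1 := by
  induction l generalizing p with
  | nil => exact h.1.le.1
  | cons st rest ih =>
    have := ih h.2.2
    rcases h.2.1 with rfl | rfl | rfl <;> simp at this <;> omega

lemma IsLatticePath.fst_lt_of_schStep {p q st : ℤ × ℤ} {l : List (ℤ × ℤ)}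
    (h : IsLatticePath schStep p (st :: l) q) (hst : st ≠ (0, -1)) : p.1 < q.1 := by
  have := h.2.2.fst_le_of_schStep
  rcases h.2.1 with rfl | rfl | rfl <;> simp_all

variable {n : ℕ} {r s : ℤ}

lemma allSchPaths_of_neg (hr : r < 0) : allSchPaths n r s = ∅ :=
  Set.eq_empty_of_forall_notMem fun _ h => hr.not_ge h.snd_nonneg

lemma schPaths_zero (hr : 0 ≤ r) : schPaths 0 r s = if r = s then {[]} else ∅ := by
  ext (_ | ⟨st, rest⟩)
  · split_ifs <;> simp_all [schPaths, IsLatticePath]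
  · have : ¬ (st :: rest ∈ schPaths 0 r s) := fun h =>
      (h.1.fst_lt_of_schStep (by simpa using h.2)).ne rfl
    split_ifs <;> simp_all

lemma allSchPaths_eq_union (hr : 0 ≤ r) :
    allSchPaths n r s = schPaths n r s ∪ List.cons (0, -1) '' allSchPaths n (r - 1) s := by
  ext (_ | ⟨st, rest⟩)
  · simp [schPaths, allSchPaths]
  · rcases eq_or_ne st (0, -1) with rfl | hst
    · simp [schPaths, allSchPaths, IsLatticePath, schStep, hr, ← sub_eq_add_neg]
    · simp [schPaths, allSchPaths, IsLatticePath, hst, hst.symm]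

lemma isLatticePath_schStep_one_iff {y : ℤ} {l : List (ℤ × ℤ)} :
    IsLatticePath schStep (1, y) l (n + 1, s) ↔ l ∈ allSchPaths n y s := by
  have := isLatticePath_add_fst_iff (S := schStep) (t := 1) (fun _ _ => Iff.rfl)
    (l := l) (p := (0, y)) (q := (n, s))
  simpa [allSchPaths] using this

lemma schPaths_succ (hr : 0 ≤ r) :
    schPaths (n + 1) r s =
      List.cons (1, 1) '' allSchPaths n (r + 1) s ∪ List.cons (1, 0) '' allSchPaths n r s := by
  ext (_ | ⟨st, rest⟩)
  · simp [schPaths, IsLatticePath]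
    omega
  · rcases em (schStep (0, r) st) with (rfl | rfl | rfl) | hst
    · simp [schPaths, IsLatticePath, schStep, hr, isLatticePath_schStep_one_iff]
    · simp [schPaths, IsLatticePath, schStep, hr, isLatticePath_schStep_one_iff]
    · simp [schPaths, IsLatticePath]
    · have hl : st :: rest ∉ schPaths (n + 1) r s := fun h => hst h.1.2.1
      simp only [hl, false_iff]
      rintro (⟨_, -, h⟩ | ⟨_, -, h⟩) <;> simp_all [schStep]

lemma allSchPaths_finite_of_schPaths_finite (h : ∀ r, 0 ≤ r → (schPaths n r s).Finite)
    (r : ℤ) : (allSchPaths n r s).Finite := by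
  rcases lt_or_ge r 0 with hr | hr
  · simp [allSchPaths_of_neg hr]
  induction r, hr using Int.leInduction with
  | base => simpa [allSchPaths_eq_union le_rfl, allSchPaths_of_neg] using h 0 le_rfl
  | succ r hr ih =>
    rw [allSchPaths_eq_union (by omega), add_sub_cancel_right]
    exact (h _ (by omega)).union (ih.image _)

lemma allSchPaths_finite (n : ℕ) (r s : ℤ) : (allSchPaths n r s).Finite := by
  induction n generalizing r with
  | zero =>
    refine allSchPaths_finite_of_schPaths_finite (fun r hr => ?_) r
    rw [schPaths_zero hr]
    split_ifs <;> simp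
  | succ n ih =>
    refine allSchPaths_finite_of_schPaths_finite (fun r hr => ?_) r
    rw [schPaths_succ hr]
    exact ((ih _).image _).union ((ih _).image _)

variable (α : ℕ → ℂ)

def allSchSum (n : ℕ) (r s : ℤ) : ℂ :=
  ∑ᶠ l ∈ allSchPaths n r s, pathWeight (wtSstep α) (0, r) l

def schSum (n : ℕ) (r s : ℤ) : ℂ :=
  ∑ᶠ l ∈ schPaths n r s, pathWeight (wtSstep α) (0, r) l

lemma allSchSum_of_neg (hr : r < 0) : allSchSum α n r s = 0 := by
  simp [allSchSum, allSchPaths_of_neg hr]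

lemma schSum_zero (hr : 0 ≤ r) : schSum α 0 r s = if r = s then 1 else 0 := by
  rw [schSum, schPaths_zero hr]
  split_ifs <;> simp [pathWeight]

lemma allSchSum_eq (hr : 0 ≤ r) :
    allSchSum α n r s =
      schSum α n r s + wtSstep α (0, r) (0, -1) * allSchSum α n (r - 1) s := by
  have hdisj : Disjoint (schPaths n r s) (List.cons (0, -1) '' allSchPaths n (r - 1) s) :=
    Set.disjoint_left.2 fun _ h ⟨_, _, hl⟩ => h.2 (by simp [← hl])
  rw [allSchSum, allSchPaths_eq_union hr, finsum_mem_union hdisj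
    ((allSchPaths_finite n r s).subset fun _ h => h.1) ((allSchPaths_finite _ _ _).image _),
    finsum_mem_image_cons_pathWeight]
  simp [schSum, allSchSum, ← sub_eq_add_neg]

lemma pathWeight_wtSstep_one (y : ℤ) (l : List (ℤ × ℤ)) :
    pathWeight (wtSstep α) (1, y) l = pathWeight (wtSstep α) (0, y) l := by
  simpa using pathWeight_add_fst (t := 1) (fun _ _ => by simp [wtSstep]) l (0, y)

lemma schSum_succ (hr : 0 ≤ r) :
    schSum α (n + 1) r s =
      allSchSum α n (r + 1) s + wtSstep α (0, r) (1, 0) * allSchSum α n r s := by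
  have hdisj : Disjoint (List.cons (1, 1) '' allSchPaths n (r + 1) s)
      (List.cons (1, 0) '' allSchPaths n r s) :=
    Set.disjoint_left.2 fun _ ⟨_, _, hl⟩ ⟨_, _, hl'⟩ => by simp [← hl] at hl'
  rw [schSum, schPaths_succ hr, finsum_mem_union hdisj ((allSchPaths_finite _ _ _).image _)
    ((allSchPaths_finite _ _ _).image _), finsum_mem_image_cons_pathWeight,
    finsum_mem_image_cons_pathWeight]
  simp [allSchSum, pathWeight_wtSstep_one, wtSstep]

end SchroederPaths

section MomentsAsPathSums

variable (α : ℕ → ℂ) (L : LaurentPolynomial ℂ →ₗ[ℂ] ℂ)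

lemma momentFunctional_T_neg_mul_szegoChi (hα0 : ∀ k, α k ≠ 0) {n s : ℕ}
    (h : ∀ r : ℕ, momentFunctional α L s (T (-n) * barInv (szegoL α r)) = schSum α n r s)
    (r : ℕ) : momentFunctional α L s (T (-n) * szegoChi α r) = allSchSum α n r s := by
  induction r with
  | zero =>
    have h0 := h 0
    rw [Nat.cast_zero] at h0 ⊢
    rw [allSchSum_eq α le_rfl, allSchSum_of_neg α (by norm_num), mul_zero, add_zero, ← h0,
      szegoChi_zero]
    simp [szegoL, szego]
  | succ r ih =>
    rw [szegoChi_succ α hα0, mul_add, mul_smul_comm, map_add, map_smul, h, ih,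
      allSchSum_eq α (Nat.cast_nonneg (r + 1)), smul_eq_mul]
    push_cast
    rw [add_sub_cancel_right]

lemma momentFunctional_eq_schSum (hα : ∀ k, ‖α k‖ < 1) (hα0 : ∀ k, α k ≠ 0)
    (hL1 : L 1 = 1)
    (hLphi : ∀ k : ℕ, 1 ≤ k → L (toLaurent (szego α k)) = 0)
    (hLbar : ∀ k : ℕ, 1 ≤ k → L (polyBarInv (szego α k)) = 0) (n r s : ℕ) :
    momentFunctional α L s (T (-n) * barInv (szegoL α r)) = schSum α n r s := by
  induction n generalizing r with
  | zero =>
    rw [Nat.cast_zero, neg_zero, T_zero, one_mul,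
      momentFunctional_barInv_szegoL α L hα hL1 hLphi hLbar, schSum_zero α (Nat.cast_nonneg r)]
    simp
  | succ n ih =>
    have hχ := momentFunctional_T_neg_mul_szegoChi α L hα0 ih
    have hT : (T (-(n + 1 : ℕ)) : LaurentPolynomial ℂ) = T (-n) * T (-1) := by
      rw [← T_add]; push_cast; ring_nf
    rw [hT, mul_assoc, T_neg_one_mul_barInv_szegoL α hα0, mul_add, mul_smul_comm, map_add,
      map_smul, hχ, hχ, schSum_succ α (Nat.cast_nonneg r), smul_eq_mul]
    push_cast
    ring

end MomentsAsPathSums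

/-- assuming `α_n ≠ 0` for all `n`, the generalized moment `μ_{n,r,s}`
equals the weight sum over Schröder paths from `(0,r)` to `(n,s)` that do not start
with a vertical down-step. -/
theorem genMom_eq_schroeder (α : ℕ → ℂ) (hα : ∀ k, ‖α k‖ < 1)
    (hα0 : ∀ k, α k ≠ 0)
    (L : LaurentPolynomial ℂ →ₗ[ℂ] ℂ) (hL1 : L 1 = 1)
    (hLphi : ∀ k : ℕ, 1 ≤ k → L (Polynomial.toLaurent (szego α k)) = 0)
    (hLbar : ∀ k : ℕ, 1 ≤ k → L (polyBarInv (szego α k)) = 0)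
    (n r s : ℕ) :
    genMom L α n r s =
      ∑ᶠ p ∈ {l : List (ℤ × ℤ) |
          IsLatticePath schStep (0, (r : ℤ)) l ((n : ℤ), (s : ℤ)) ∧
            l.head? ≠ some (0, -1)},
        pathWeight (wtSstep α) (0, (r : ℤ)) p := by
  rw [genMom_eq_momentFunctional]
  exact momentFunctional_eq_schSum α L hα hα0 hL1 hLphi hLbar n r s
end
end

section
/- (Single inserted mass point.) Let γ ∈ (0,1) and set α_n = γ/(1+nγ) for all n ≥ 0 (so 0 < α_n < 1). Then for all nonnegative integers n and m: μ_{n,m} = δ_{n,m} if n ≤ m, and μ_{n,m} = γ/(1+mγ) if n > m. -/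
open Polynomial LaurentPolynomial Finset

noncomputable section

/-! Because `α` is real and `1 / α_{n+1} = 1 / α_n + 1`, Szegő's recurrence closes up to
`Φ_m = z^m - α_{m-1} (1 + z + ⋯ + z^{m-1})`. Feeding this into `L(Φ_k) = L(Φ̄_k(1/z)) = 0`
forces the moments `L(z^k) = γ` for every `k ≠ 0`, i.e. `L` is integration against
`γ δ₁ + (1 - γ) dθ/2π`. Hence `⟨Φ_m, z^n⟩ = γ Φ_m(1) + (1 - γ) [z^n] Φ_m`, and the three cases
are read off the closed form together with `∏_{j ≤ M} (1 - α_j²) = (1 - γ)(1 + (M+1)γ)/(1 + Mγ)`. -/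

lemma laurentBarInv_T (n : ℤ) : laurentBarInv (T n) = T (-n) := by
  rw [laurentBarInv, T, AddMonoidAlgebra.coeff_single, Finsupp.sum_single_index] <;> simp

lemma polyBarInv_eq_invert_toLaurent_map (p : ℂ[X]) :
    polyBarInv p = invert (toLaurent (p.map (starRingEnd ℂ))) := by
  induction p using Polynomial.induction_on' with
  | add p q hp hq =>
    rw [polyBarInv, Polynomial.sum_add_index _ _ _ (fun _ => by simp)
      (fun _ _ _ => by rw [map_add, map_add, add_mul]), ← polyBarInv, ← polyBarInv, hp, hq,
      Polynomial.map_add, map_add, map_add]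
  | monomial k a =>
    rw [polyBarInv, Polynomial.sum_monomial_index _ _ (by simp), Polynomial.map_monomial,
      ← C_mul_X_pow_eq_monomial, toLaurent_C_mul_X_pow, map_mul, invert_C, invert_T]

section GeomSum

variable {R : Type*}

lemma reflect_geom_sum [Semiring R] (m : ℕ) :
    reflect m (∑ k ∈ range m, (X : R[X]) ^ k) = X * ∑ k ∈ range m, X ^ k := by
  ext (_ | n)
  · simp
  · simp only [coeff_reflect, coeff_X_mul, finsetSum_coeff, coeff_X_pow, Finset.sum_ite_eq,
      Finset.mem_range]
    by_cases h : n + 1 ≤ m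
    · rw [revAt_le h, if_pos (by omega), if_pos (by omega)]
    · rw [revAt_eq_self_of_lt (by omega), if_neg (by omega), if_neg (by omega)]

lemma eval_one_X_pow_sub_C_mul_geom_sum [CommRing R] (a : R) (m : ℕ) :
    (X ^ m - Polynomial.C a * ∑ k ∈ range m, (X : R[X]) ^ k).eval 1 = 1 - m * a := by
  simp [eval_finsetSum, mul_comm]

lemma coeff_X_pow_sub_C_mul_geom_sum [Ring R] (a : R) (m n : ℕ) :
    (X ^ m - Polynomial.C a * ∑ k ∈ range m, (X : R[X]) ^ k).coeff n =
      if n = m then 1 else if n < m then -a else 0 := by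
  simp only [coeff_sub, coeff_C_mul, finsetSum_coeff, coeff_X_pow, Finset.sum_ite_eq,
    Finset.mem_range]
  split_ifs <;> first | omega | simp

end GeomSum

section Szego

variable {α : ℕ → ℂ}

lemma szego_map_conj (hα : ∀ n, starRingEnd ℂ (α n) = α n) (m : ℕ) :
    (szego α m).map (starRingEnd ℂ) = szego α m := by
  induction m with
  | zero => simp [szego]
  | succ m ih =>
    rw [szego, Polynomial.map_sub, Polynomial.map_mul, Polynomial.map_mul, Polynomial.map_X,
      Polynomial.map_C, ← reflect_map, ih, ih, hα, hα]

-- At `m = 0` the junk value `α (0 - 1) = α 0` multiplies an empty sum.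
lemma szego_eq_X_pow_sub_C_mul_geom_sum (hα : ∀ n, starRingEnd ℂ (α n) = α n)
    (hrec : ∀ n, α n * (1 - α (n + 1)) = α (n + 1)) (m : ℕ) :
    szego α m = X ^ m - Polynomial.C (α (m - 1)) * ∑ k ∈ range m, X ^ k := by
  induction m with
  | zero => simp [szego]
  | succ m ih =>
    have hgeom : ∑ k ∈ range (m + 1), (X : ℂ[X]) ^ k = 1 + X * ∑ k ∈ range m, X ^ k := by
      rw [sum_range_succ', mul_sum, add_comm]
      simp only [pow_succ', pow_zero]
    rw [szego, szego_map_conj hα, hα, ih, reflect_sub, reflect_C_mul, reflect_monomial,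
      revAt_le le_rfl, Nat.sub_self, pow_zero, reflect_geom_sum, Nat.add_sub_cancel, hgeom]
    rcases m with _ | m
    · simp
    · have hC : Polynomial.C (α m) * (1 - Polynomial.C (α (m + 1))) =
          Polynomial.C (α (m + 1)) := by
        rw [← map_one Polynomial.C, ← map_sub, ← map_mul, hrec]
      rw [Nat.add_sub_cancel]
      linear_combination (-X * ∑ k ∈ range (m + 1), (X : ℂ[X]) ^ k) * hC

end Szego

lemma genMom_zero_eq (L : ℂ[T;T⁻¹] →ₗ[ℂ] ℂ) (α : ℕ → ℂ) (n m : ℕ) :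
    genMom L α n 0 m = L (toLaurent (szego α m) * T (-n)) /
      ∏ j ∈ range m, ((1 - Complex.normSq (α j) : ℝ) : ℂ) := by
  rw [genMom, szego, map_one, mul_one, laurentBarInv_T]

lemma map_toLaurent_mul_T_neg {R : Type*} [CommRing R] {c : R} (L : R[T;T⁻¹] →ₗ[R] R)
    (hL : ∀ k : ℤ, L (T k) = if k = 0 then 1 else c) (p : R[X]) (n : ℕ) :
    L (toLaurent p * T (-n)) = c * p.eval 1 + (1 - c) * p.coeff n := by
  induction p using Polynomial.induction_on' with
  | add p q hp hq =>
    rw [map_add, add_mul, map_add, hp, hq, eval_add, coeff_add]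
    ring
  | monomial k a =>
    rw [← C_mul_X_pow_eq_monomial, toLaurent_C_mul_X_pow, mul_assoc, ← T_add,
      ← LaurentPolynomial.smul_eq_C_mul, map_smul, hL, eval_C_mul, eval_pow, eval_X, one_pow,
      coeff_C_mul_X_pow, smul_eq_mul]
    by_cases h : n = k
    · rw [if_pos (by omega), if_pos h]; ring
    · rw [if_neg (by omega), if_neg h]; ring

def singleMassVerblunsky (γ : ℝ) (n : ℕ) : ℂ := ((γ / (1 + n * γ) : ℝ) : ℂ)

section SingleMass

variable {γ : ℝ}

lemma conj_singleMassVerblunsky (n : ℕ) :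
    starRingEnd ℂ (singleMassVerblunsky γ n) = singleMassVerblunsky γ n :=
  Complex.conj_ofReal _

lemma singleMassVerblunsky_mul_one_add (hγ : 0 ≤ γ) (n : ℕ) :
    singleMassVerblunsky γ n * (1 + n * γ) = γ := by
  have : (0 : ℝ) < 1 + n * γ := by positivity
  rw [singleMassVerblunsky]
  exact_mod_cast div_mul_cancel₀ γ this.ne'

lemma singleMassVerblunsky_mul_one_sub_succ (hγ : 0 ≤ γ) (n : ℕ) :
    singleMassVerblunsky γ n * (1 - singleMassVerblunsky γ (n + 1)) =
      singleMassVerblunsky γ (n + 1) := by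
  simp only [singleMassVerblunsky]
  rw [← Complex.ofReal_one, ← Complex.ofReal_sub, ← Complex.ofReal_mul]
  congr 1
  push_cast
  field_simp
  ring

lemma szego_singleMassVerblunsky (hγ : 0 ≤ γ) (m : ℕ) :
    szego (singleMassVerblunsky γ) m =
      X ^ m - Polynomial.C (singleMassVerblunsky γ (m - 1)) * ∑ k ∈ range m, X ^ k :=
  szego_eq_X_pow_sub_C_mul_geom_sum conj_singleMassVerblunsky
    (singleMassVerblunsky_mul_one_sub_succ hγ) m

lemma eval_one_szego_singleMassVerblunsky_succ (hγ : 0 ≤ γ) (M : ℕ) :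
    (szego (singleMassVerblunsky γ) (M + 1)).eval 1 = ((1 - γ) / (1 + M * γ) : ℝ) := by
  have hD : (1 + M * γ : ℂ) ≠ 0 := by exact_mod_cast (by positivity : (1 + M * γ : ℝ) ≠ 0)
  rw [szego_singleMassVerblunsky hγ, eval_one_X_pow_sub_C_mul_geom_sum, Nat.add_sub_cancel,
    singleMassVerblunsky]
  push_cast
  field_simp
  ring

lemma prod_one_sub_normSq_singleMassVerblunsky_succ (hγ : 0 ≤ γ) (M : ℕ) :
    ∏ j ∈ range (M + 1), (1 - Complex.normSq (singleMassVerblunsky γ j)) =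
      (1 - γ) * (1 + (M + 1) * γ) / (1 + M * γ) := by
  induction M with
  | zero =>
    rw [zero_add, prod_range_one, singleMassVerblunsky, Complex.normSq_ofReal]
    simp only [Nat.cast_zero, zero_mul, add_zero, div_one, zero_add, one_mul]
    ring
  | succ M ih =>
    rw [prod_range_succ, ih, singleMassVerblunsky, Complex.normSq_ofReal, Nat.cast_succ,
      show (1 + M * γ : ℝ) = 1 + (M + 1) * γ - γ by ring,
      show (1 + (M + 1 + 1) * γ : ℝ) = 1 + (M + 1) * γ + γ by ring]
    have hD : (1 + (M + 1) * γ : ℝ) ≠ 0 := by positivity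
    have hD' : (1 + (M + 1) * γ - γ : ℝ) ≠ 0 := by nlinarith
    generalize 1 + ((M : ℝ) + 1) * γ = D at *
    field_simp
    ring

lemma map_T_natCast_of_map_szego_eq_zero (hγ : 0 ≤ γ) (Λ : ℂ[T;T⁻¹] →ₗ[ℂ] ℂ) (h1 : Λ 1 = 1)
    (hΦ : ∀ k : ℕ, 1 ≤ k → Λ (toLaurent (szego (singleMassVerblunsky γ) k)) = 0) (k : ℕ) :
    Λ (T k) = if k = 0 then 1 else (γ : ℂ) := by
  induction k using Nat.strong_induction_on with
  | _ k ih =>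
    rcases k with _ | m
    · simpa using h1
    · have hsum : ∑ j ∈ range (m + 1), Λ (T j) = 1 + m * γ := by
        rw [sum_range_succ', sum_congr rfl fun j hj => ih (j + 1) (by simpa using hj),
          ih 0 m.succ_pos]
        simp only [Nat.add_one_ne_zero, if_false, if_true, sum_const, card_range, nsmul_eq_mul]
        ring
      have h := hΦ (m + 1) m.succ_pos
      rw [szego_singleMassVerblunsky hγ, map_sub, map_mul, toLaurent_C, map_sum,
        ← LaurentPolynomial.smul_eq_C_mul, map_sub, map_smul, map_sum] at h
      simp only [toLaurent_X_pow, Nat.add_sub_cancel, hsum, smul_eq_mul] at h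
      rw [if_neg m.succ_ne_zero, ← singleMassVerblunsky_mul_one_add hγ m]
      linear_combination h

lemma map_T_of_map_szego_eq_zero (hγ : 0 ≤ γ) (L : ℂ[T;T⁻¹] →ₗ[ℂ] ℂ) (hL1 : L 1 = 1)
    (hLphi : ∀ k : ℕ, 1 ≤ k → L (toLaurent (szego (singleMassVerblunsky γ) k)) = 0)
    (hLbar : ∀ k : ℕ, 1 ≤ k → L (polyBarInv (szego (singleMassVerblunsky γ) k)) = 0) (k : ℤ) :
    L (T k) = if k = 0 then 1 else (γ : ℂ) := by
  obtain ⟨k, rfl | rfl⟩ := Int.eq_nat_or_neg k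
  · simpa using map_T_natCast_of_map_szego_eq_zero hγ L hL1 hLphi k
  · have hinv := map_T_natCast_of_map_szego_eq_zero hγ (L ∘ₗ invert.toLinearMap)
      (by simp [hL1]) (fun k hk => by
        simpa [polyBarInv_eq_invert_toLaurent_map,
          szego_map_conj conj_singleMassVerblunsky] using hLbar k hk) k
    simpa using hinv

lemma genMom_singleMassVerblunsky (hγ0 : 0 ≤ γ) (hγ1 : γ < 1) {L : ℂ[T;T⁻¹] →ₗ[ℂ] ℂ}
    (hL : ∀ k : ℤ, L (T k) = if k = 0 then 1 else (γ : ℂ)) (n m : ℕ) :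
    genMom L (singleMassVerblunsky γ) n 0 m =
      if n < m then 0 else if n = m then 1 else ((γ / (1 + m * γ) : ℝ) : ℂ) := by
  rw [genMom_zero_eq]
  rcases m with _ | M
  · simp only [szego, toLaurent_one, one_mul, hL, prod_range_zero, div_one]
    by_cases hn : n = 0 <;> simp [hn]
  · rw [map_toLaurent_mul_T_neg L hL, eval_one_szego_singleMassVerblunsky_succ hγ0,
      szego_singleMassVerblunsky hγ0, coeff_X_pow_sub_C_mul_geom_sum, Nat.add_sub_cancel,
      ← Complex.ofReal_prod, prod_one_sub_normSq_singleMassVerblunsky_succ hγ0,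
      singleMassVerblunsky]
    have h1γ : 1 - γ ≠ 0 := by linarith
    rcases lt_trichotomy n (M + 1) with hlt | rfl | hgt
    · rw [if_neg hlt.ne, if_pos hlt, if_pos hlt]
      norm_cast
      field_simp
      ring
    · rw [if_pos rfl, if_neg (lt_irrefl _), if_pos rfl]
      norm_cast
      field_simp
      push_cast
      ring
    · rw [if_neg hgt.ne', if_neg (by omega), if_neg (by omega), if_neg hgt.ne']
      norm_cast
      field_simp
      ring

end SingleMass

/-- single inserted mass point: with `α_n = γ/(1+nγ)`, `γ ∈ (0,1)`,
the moments are `μ_{n,m} = δ_{n,m}` for `n ≤ m` and `μ_{n,m} = γ/(1+mγ)` for `n > m`. -/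
theorem single_mass_point (γ : ℝ) (hγ0 : 0 < γ) (hγ1 : γ < 1) (α : ℕ → ℂ)
    (hαdef : α = fun n : ℕ => ((γ / (1 + n * γ) : ℝ) : ℂ))
    (L : LaurentPolynomial ℂ →ₗ[ℂ] ℂ) (hL1 : L 1 = 1)
    (hLphi : ∀ k : ℕ, 1 ≤ k → L (Polynomial.toLaurent (szego α k)) = 0)
    (hLbar : ∀ k : ℕ, 1 ≤ k → L (polyBarInv (szego α k)) = 0) :
    ∀ n m : ℕ,
      (n ≤ m → genMom L α n 0 m = if n = m then 1 else 0) ∧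
      (m < n → genMom L α n 0 m = ((γ / (1 + m * γ) : ℝ) : ℂ)) := by
  obtain rfl : α = singleMassVerblunsky γ := hαdef
  intro n m
  rw [genMom_singleMassVerblunsky hγ0.le hγ1
    (map_T_of_map_szego_eq_zero hγ0.le L hL1 hLphi hLbar)]
  refine ⟨fun hle => ?_, fun hlt => ?_⟩
  · rcases hle.lt_or_eq with hlt | rfl
    · simp [hlt, hlt.ne]
    · simp
  · simp [hlt.not_gt, hlt.ne']

end
end
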